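/- arXiv:2602.17835 — 2 statements merged into one kernel-verified Lean document; each statement's English description precedes it below -/
import Mathlib

section
/- (Influence bound for TracIn under layer perturbation.) Assume: (A1) for μ-a.e. z and ν-a.e. z', the map δ(z,·) is differentiable on a neighborhood of the segment {u_τ(z) : τ ∈ [0,1]} and there is a measurable K(z) ≥ 0 bounding the operator norm of its Jacobian at every point of that segment; (A2) M_μ := ∫ (sup_{τ∈[0,1]} ‖δ_τ(z)‖)·‖h(z)‖ dμ(z) and M_ν := ∫ (sup_{τ∈[0,1]} ‖δ_τ(z')‖)·‖h(z')‖ dν(z') are finite; (A3) there is η ∈ (0,1] such that δ₀(z) ≠ 0 and |⟨δ₀(z), E h(z)⟩| ≥ η ‖δ₀(z)‖ ‖E h(z)‖ holds μ-a.e. and ν-a.e., and the quantities C_μ := √(∫ K(z)² ‖h(z)‖² / ‖δ₀(z)‖² dμ(z)) and C_ν := √(∫ K(z')² ‖h(z')‖² / ‖δ₀(z')‖² dν(z')) are finite; (A4) there is κ ≥ 0 with ∫ e(z')² dν(z') ≤ κ ∫ e(z)² dμ(z). Assume all displayed maps are measurable and integrable so that Fubini applies. Then ∫∫ |I_Ŵ(z,z')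 − I_W(z,z')| dμ(z) dν(z') ≤ C_κ · √(∫ e(z)² dμ(z)), where C_κ = (M_ν/η)·C_μ + √κ · (M_μ/η)·C_ν; in particular a finite constant C_κ > 0 with this property exists. -/
open Matrix MeasureTheory
open scoped RealInnerProductSpace

lemma mvt_choice {F G : Type*} [NormedAddCommGroup F] [NormedSpace ℝ F]
    [NormedAddCommGroup G] [NormedSpace ℝ G]
    {f : F → G} {s : Set F} (hs : Convex ℝ s) {C : ℝ}
    (hd : ∀ x ∈ s, ∃ J : F →L[ℝ] G, HasFDerivAt f J x ∧ ‖J‖ ≤ C)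
    {x y : F} (hx : x ∈ s) (hy : y ∈ s) : ‖f y - f x‖ ≤ C * ‖y - x‖ := by
  classical
  set f' : F → (F →L[ℝ] G) := fun a => if h : a ∈ s then (hd a h).choose else 0 with hf'
  refine hs.norm_image_sub_le_of_norm_hasFDerivWithin_le (f' := f') ?_ ?_ hx hy
  · intro a ha
    simp only [hf', dif_pos ha]
    exact ((hd a ha).choose_spec.1).hasFDerivWithinAt
  · intro a ha
    simp only [hf', dif_pos ha]
    exact (hd a ha).choose_spec.2

lemma cs_int {α : Type*} [MeasurableSpace α] {μ : Measure α} {f g : α → ℝ}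
    (hf : AEStronglyMeasurable f μ) (hg : AEStronglyMeasurable g μ)
    (hf0 : ∀ x, 0 ≤ f x) (hg0 : ∀ x, 0 ≤ g x)
    (hf2 : Integrable (fun x => f x ^ 2) μ) (hg2 : Integrable (fun x => g x ^ 2) μ) :
    ∫ x, f x * g x ∂μ ≤ Real.sqrt (∫ x, f x ^ 2 ∂μ) * Real.sqrt (∫ x, g x ^ 2 ∂μ) := by
  have hpq : Real.HolderConjugate 2 2 := ⟨by norm_num, by norm_num, by norm_num⟩
  have h2 : (ENNReal.ofReal (2:ℝ)) = 2 := by norm_num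
  have hmf : MemLp f (ENNReal.ofReal (2:ℝ)) μ := by
    rw [h2]; exact (memLp_two_iff_integrable_sq hf).2 hf2
  have hmg : MemLp g (ENNReal.ofReal (2:ℝ)) μ := by
    rw [h2]; exact (memLp_two_iff_integrable_sq hg).2 hg2
  have := integral_mul_le_Lp_mul_Lq_of_nonneg hpq (ae_of_all _ hf0) (ae_of_all _ hg0) hmf hmg
  calc ∫ x, f x * g x ∂μ
      ≤ (∫ a, f a ^ (2:ℝ) ∂μ) ^ ((1:ℝ)/2) * (∫ a, g a ^ (2:ℝ) ∂μ) ^ ((1:ℝ)/2) := this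
    _ = Real.sqrt (∫ x, f x ^ 2 ∂μ) * Real.sqrt (∫ x, g x ^ 2 ∂μ) := by
        rw [Real.sqrt_eq_rpow, Real.sqrt_eq_rpow]
        norm_num [Real.rpow_natCast]

/-- **Influence bound for TracIn under a layer perturbation** (Proposition 1).
With `Ŵ = W + E`, layer inputs `h`, upstream gradient maps `δ(z, ·)`,
`u_τ(z) = (W + τE) h(z)`, `δ_τ(z) = δ(z, u_τ(z))`, layer influences
`I_W(z,z') = ⟨δ₀(z), δ₀(z')⟩⟨h(z), h(z')⟩`, `I_Ŵ(z,z') = ⟨δ₁(z), δ₁(z')⟩⟨h(z), h(z')⟩`,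
and layer-local directional effect `e(z) = δ₀(z)ᵀ E h(z)`, under assumptions
(A1) backward smoothness, (A2) finite moments, (A3) coherence of local directions, and
(A4) bounded covariate shift, one has
`∫∫ |I_Ŵ(z,z') − I_W(z,z')| dμ(z) dν(z') ≤ C_κ √(∫ e(z)² dμ(z))` with
`C_κ = (M_ν/η)·C_μ + √κ·(M_μ/η)·C_ν`. -/
theorem tracin_influence_bound {m n : ℕ} {Z : Type*} [MeasurableSpace Z]
    (μ ν : Measure Z) [IsProbabilityMeasure μ] [IsProbabilityMeasure ν]
    (W E : Matrix (Fin m) (Fin n) ℝ)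
    (h : Z → EuclideanSpace ℝ (Fin n))
    (δ : Z → EuclideanSpace ℝ (Fin m) → EuclideanSpace ℝ (Fin m))
    (K : Z → ℝ)
    -- abbreviations
    (u : ℝ → Z → EuclideanSpace ℝ (Fin m))
    (hu : ∀ (τ : ℝ) (z : Z), u τ z = Matrix.toEuclideanLin (W + τ • E) (h z))
    (IW IWhat : Z → Z → ℝ)
    (hIW : ∀ z z', IW z z' = ⟪δ z (u 0 z), δ z' (u 0 z')⟫ * ⟪h z, h z'⟫)
    (hIWhat : ∀ z z', IWhat z z' = ⟪δ z (u 1 z), δ z' (u 1 z')⟫ * ⟪h z, h z'⟫)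
    (e : Z → ℝ)
    (he : ∀ z, e z = ⟪δ z (u 0 z), Matrix.toEuclideanLin E (h z)⟫)
    -- measurability of the displayed maps
    (hhmeas : Measurable h) (hKmeas : Measurable K) (hK0 : ∀ z, 0 ≤ K z)
    -- (A1) backward smoothness, μ-a.e. and ν-a.e.
    (hA1μ : ∀ᵐ z ∂μ, ∀ τ ∈ Set.Icc (0:ℝ) 1,
      ∃ J : EuclideanSpace ℝ (Fin m) →L[ℝ] EuclideanSpace ℝ (Fin m),
        HasFDerivAt (δ z) J (u τ z) ∧ ‖J‖ ≤ K z)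
    (hA1ν : ∀ᵐ z ∂ν, ∀ τ ∈ Set.Icc (0:ℝ) 1,
      ∃ J : EuclideanSpace ℝ (Fin m) →L[ℝ] EuclideanSpace ℝ (Fin m),
        HasFDerivAt (δ z) J (u τ z) ∧ ‖J‖ ≤ K z)
    -- (A2) finite moments
    (Mμ Mν : ℝ)
    (hMμ : Mμ = ∫ z, (⨆ τ : Set.Icc (0:ℝ) 1, ‖δ z (u τ z)‖) * ‖h z‖ ∂μ)
    (hMν : Mν = ∫ z, (⨆ τ : Set.Icc (0:ℝ) 1, ‖δ z (u τ z)‖) * ‖h z‖ ∂ν)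
    (hMμint : Integrable (fun z => (⨆ τ : Set.Icc (0:ℝ) 1, ‖δ z (u τ z)‖) * ‖h z‖) μ)
    (hMνint : Integrable (fun z => (⨆ τ : Set.Icc (0:ℝ) 1, ‖δ z (u τ z)‖) * ‖h z‖) ν)
    -- (A3) coherence of local directions
    (η : ℝ) (hη : η ∈ Set.Ioc (0:ℝ) 1)
    (hA3μ : ∀ᵐ z ∂μ, δ z (u 0 z) ≠ 0 ∧
      η * (‖δ z (u 0 z)‖ * ‖Matrix.toEuclideanLin E (h z)‖) ≤
        |⟪δ z (u 0 z), Matrix.toEuclideanLin E (h z)⟫|)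
    (hA3ν : ∀ᵐ z ∂ν, δ z (u 0 z) ≠ 0 ∧
      η * (‖δ z (u 0 z)‖ * ‖Matrix.toEuclideanLin E (h z)‖) ≤
        |⟪δ z (u 0 z), Matrix.toEuclideanLin E (h z)⟫|)
    (Cμ Cν : ℝ)
    (hCμ : Cμ = Real.sqrt (∫ z, K z ^ 2 * ‖h z‖ ^ 2 / ‖δ z (u 0 z)‖ ^ 2 ∂μ))
    (hCν : Cν = Real.sqrt (∫ z, K z ^ 2 * ‖h z‖ ^ 2 / ‖δ z (u 0 z)‖ ^ 2 ∂ν))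
    (hCμint : Integrable (fun z => K z ^ 2 * ‖h z‖ ^ 2 / ‖δ z (u 0 z)‖ ^ 2) μ)
    (hCνint : Integrable (fun z => K z ^ 2 * ‖h z‖ ^ 2 / ‖δ z (u 0 z)‖ ^ 2) ν)
    -- (A4) bounded covariate shift
    (κ : ℝ) (hκ0 : 0 ≤ κ)
    (heμint : Integrable (fun z => e z ^ 2) μ)
    (heνint : Integrable (fun z => e z ^ 2) ν)
    (hA4 : (∫ z, e z ^ 2 ∂ν) ≤ κ * ∫ z, e z ^ 2 ∂μ)
    -- integrability so that Fubini applies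
    (hFubini : Integrable (fun p : Z × Z => IWhat p.2 p.1 - IW p.2 p.1) (ν.prod μ))
    (hKhint : Integrable (fun z => K z * ‖h z‖ * ‖Matrix.toEuclideanLin E (h z)‖) μ)
    (hKhint' : Integrable (fun z => K z * ‖h z‖ * ‖Matrix.toEuclideanLin E (h z)‖) ν) :
    (∫ z', ∫ z, |IWhat z z' - IW z z'| ∂μ ∂ν)
      ≤ ((Mν / η) * Cμ + Real.sqrt κ * ((Mμ / η) * Cν)) *
          Real.sqrt (∫ z, e z ^ 2 ∂μ) := by
  classical
  obtain ⟨hη0, _⟩ := hη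
  -- path structure
  have hupath : ∀ (τ : ℝ) (z : Z),
      u τ z = u 0 z + τ • (Matrix.toEuclideanLin E (h z)) := by
    intro τ z
    have hsm : Matrix.toEuclideanLin (τ • E) = τ • Matrix.toEuclideanLin E :=
      _root_.map_smul Matrix.toEuclideanLin τ E
    simp only [hu, zero_smul, add_zero, map_add, LinearMap.add_apply, hsm,
      LinearMap.smul_apply]
  have huτ : ∀ (z : Z) (τ : ℝ), u 0 z + τ • (u 1 z - u 0 z) = u τ z := by
    intro z τ
    rw [hupath τ z, hupath 1 z]
    simp
  -- abbreviations
  set S : Z → ℝ := fun z => ⨆ τ : Set.Icc (0:ℝ) 1, ‖δ z (u τ z)‖ with hSdef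
  have hS0 : ∀ z, 0 ≤ S z := fun z => Real.iSup_nonneg fun τ => norm_nonneg _
  have hMμ' : Mμ = ∫ z, S z * ‖h z‖ ∂μ := hMμ
  have hMν' : Mν = ∫ z, S z * ‖h z‖ ∂ν := hMν
  have hMμint' : Integrable (fun z => S z * ‖h z‖) μ := hMμint
  have hMνint' : Integrable (fun z => S z * ‖h z‖) ν := hMνint
  set A : Z → ℝ := fun z => K z * ‖h z‖ / ‖δ z (u 0 z)‖ * |e z| with hAdef
  have hA0 : ∀ z, 0 ≤ A z := fun z =>
    mul_nonneg (div_nonneg (mul_nonneg (hK0 z) (norm_nonneg _)) (norm_nonneg _)) (abs_nonneg _)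
  -- consequences of (A1) at a point
  have hA1cons : ∀ z, (∀ τ ∈ Set.Icc (0:ℝ) 1,
      ∃ J : EuclideanSpace ℝ (Fin m) →L[ℝ] EuclideanSpace ℝ (Fin m),
        HasFDerivAt (δ z) J (u τ z) ∧ ‖J‖ ≤ K z) →
      (‖δ z (u 1 z) - δ z (u 0 z)‖ ≤ K z * ‖Matrix.toEuclideanLin E (h z)‖) ∧
      (‖δ z (u 0 z)‖ ≤ S z) ∧ (‖δ z (u 1 z)‖ ≤ S z) := by
    intro z hz
    have hmem : ∀ τ ∈ Set.Icc (0:ℝ) 1, u τ z ∈ segment ℝ (u 0 z) (u 1 z) := by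
      intro τ hτ
      rw [segment_eq_image']
      exact ⟨τ, hτ, huτ z τ⟩
    have hseg : ∀ x ∈ segment ℝ (u 0 z) (u 1 z),
        ∃ J : EuclideanSpace ℝ (Fin m) →L[ℝ] EuclideanSpace ℝ (Fin m),
          HasFDerivAt (δ z) J x ∧ ‖J‖ ≤ K z := by
      intro x hx
      rw [segment_eq_image'] at hx
      obtain ⟨τ, hτ, hxeq⟩ := hx
      have hx2 : x = u τ z := by rw [← hxeq]; exact huτ z τ
      rw [hx2]
      exact hz τ hτ
    have hmvt : ∀ τ ∈ Set.Icc (0:ℝ) 1,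
        ‖δ z (u τ z) - δ z (u 0 z)‖ ≤ K z * ‖Matrix.toEuclideanLin E (h z)‖ := by
      intro τ hτ
      have h1 := mvt_choice (convex_segment _ _) hseg
        (hmem 0 ⟨le_refl _, zero_le_one⟩) (hmem τ hτ)
      refine h1.trans ?_
      have h2 : u τ z - u 0 z = τ • (Matrix.toEuclideanLin E (h z)) := by
        rw [hupath τ z]; abel
      rw [h2, norm_smul, Real.norm_eq_abs, abs_of_nonneg hτ.1]
      have := mul_le_of_le_one_left (norm_nonneg (Matrix.toEuclideanLin E (h z))) hτ.2
      exact mul_le_mul_of_nonneg_left this (hK0 z)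
    have hbdd : BddAbove (Set.range fun τ : Set.Icc (0:ℝ) 1 => ‖δ z (u τ z)‖) := by
      refine ⟨‖δ z (u 0 z)‖ + K z * ‖Matrix.toEuclideanLin E (h z)‖, ?_⟩
      rintro r ⟨τ, rfl⟩
      have h1 := norm_sub_norm_le (δ z (u τ z)) (δ z (u 0 z))
      have h2 := hmvt τ τ.2
      linarith
    refine ⟨by simpa using hmvt 1 ⟨zero_le_one, le_refl _⟩, ?_, ?_⟩
    · simpa using le_ciSup hbdd (⟨0, by norm_num⟩ : Set.Icc (0:ℝ) 1)
    · simpa using le_ciSup hbdd (⟨1, by norm_num⟩ : Set.Icc (0:ℝ) 1)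
  -- consequences of (A3) at a point
  have hA3cons : ∀ z, (δ z (u 0 z) ≠ 0 ∧
      η * (‖δ z (u 0 z)‖ * ‖Matrix.toEuclideanLin E (h z)‖) ≤
        |⟪δ z (u 0 z), Matrix.toEuclideanLin E (h z)⟫|) →
      (‖Matrix.toEuclideanLin E (h z)‖ ≤ |e z| / (η * ‖δ z (u 0 z)‖)) ∧
      (|e z| ≤ ‖δ z (u 0 z)‖ * ‖Matrix.toEuclideanLin E (h z)‖) := by
    rintro z ⟨hne, hcoh⟩
    have hd0 : 0 < ‖δ z (u 0 z)‖ := norm_pos_iff.2 hne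
    have he' : |e z| = |⟪δ z (u 0 z), Matrix.toEuclideanLin E (h z)⟫| := by rw [he]
    constructor
    · rw [le_div_iff₀ (by positivity)]
      calc ‖Matrix.toEuclideanLin E (h z)‖ * (η * ‖δ z (u 0 z)‖)
          = η * (‖δ z (u 0 z)‖ * ‖Matrix.toEuclideanLin E (h z)‖) := by ring
        _ ≤ |e z| := by rw [he']; exact hcoh
    · rw [he']
      exact abs_real_inner_le_norm _ _
  -- pointwise bound
  have hpt : ∀ z z',
      (∀ τ ∈ Set.Icc (0:ℝ) 1,
        ∃ J : EuclideanSpace ℝ (Fin m) →L[ℝ] EuclideanSpace ℝ (Fin m),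
          HasFDerivAt (δ z) J (u τ z) ∧ ‖J‖ ≤ K z) →
      (δ z (u 0 z) ≠ 0 ∧
        η * (‖δ z (u 0 z)‖ * ‖Matrix.toEuclideanLin E (h z)‖) ≤
          |⟪δ z (u 0 z), Matrix.toEuclideanLin E (h z)⟫|) →
      (∀ τ ∈ Set.Icc (0:ℝ) 1,
        ∃ J : EuclideanSpace ℝ (Fin m) →L[ℝ] EuclideanSpace ℝ (Fin m),
          HasFDerivAt (δ z') J (u τ z') ∧ ‖J‖ ≤ K z') →
      (δ z' (u 0 z') ≠ 0 ∧
        η * (‖δ z' (u 0 z')‖ * ‖Matrix.toEuclideanLin E (h z')‖) ≤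
          |⟪δ z' (u 0 z'), Matrix.toEuclideanLin E (h z')⟫|) →
      |IWhat z z' - IW z z'| ≤
        (1/η) * (A z * (S z' * ‖h z'‖) + (S z * ‖h z‖) * A z') := by
    intro z z' h1 h3 h1' h3'
    obtain ⟨hK1, hs0, hs1⟩ := hA1cons z h1
    obtain ⟨hK1', hs0', hs1'⟩ := hA1cons z' h1'
    obtain ⟨hEb, _⟩ := hA3cons z h3
    obtain ⟨hEb', _⟩ := hA3cons z' h3'
    have hd0 : 0 < ‖δ z (u 0 z)‖ := norm_pos_iff.2 h3.1
    have hd0' : 0 < ‖δ z' (u 0 z')‖ := norm_pos_iff.2 h3'.1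
    have hb1 : ‖δ z (u 1 z) - δ z (u 0 z)‖ ≤ K z * (|e z| / (η * ‖δ z (u 0 z)‖)) :=
      hK1.trans (mul_le_mul_of_nonneg_left hEb (hK0 z))
    have hb1' : ‖δ z' (u 1 z') - δ z' (u 0 z')‖ ≤ K z' * (|e z'| / (η * ‖δ z' (u 0 z')‖)) :=
      hK1'.trans (mul_le_mul_of_nonneg_left hEb' (hK0 z'))
    have hsplit : ⟪δ z (u 1 z), δ z' (u 1 z')⟫ - ⟪δ z (u 0 z), δ z' (u 0 z')⟫ =
        ⟪δ z (u 1 z) - δ z (u 0 z), δ z' (u 1 z')⟫ +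
          ⟪δ z (u 0 z), δ z' (u 1 z') - δ z' (u 0 z')⟫ := by
      rw [inner_sub_left, inner_sub_right]; ring
    calc |IWhat z z' - IW z z'|
        = |⟪δ z (u 1 z), δ z' (u 1 z')⟫ - ⟪δ z (u 0 z), δ z' (u 0 z')⟫| * |⟪h z, h z'⟫| := by
          rw [hIWhat, hIW, ← sub_mul, abs_mul]
      _ ≤ (‖δ z (u 1 z) - δ z (u 0 z)‖ * ‖δ z' (u 1 z')‖ +
            ‖δ z (u 0 z)‖ * ‖δ z' (u 1 z') - δ z' (u 0 z')‖) * (‖h z‖ * ‖h z'‖) := by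
          refine mul_le_mul ?_ (abs_real_inner_le_norm _ _) (abs_nonneg _) (by positivity)
          rw [hsplit]
          refine (abs_add_le _ _).trans ?_
          exact add_le_add (abs_real_inner_le_norm _ _) (abs_real_inner_le_norm _ _)
      _ ≤ ((K z * (|e z| / (η * ‖δ z (u 0 z)‖))) * S z' +
            S z * (K z' * (|e z'| / (η * ‖δ z' (u 0 z')‖)))) * (‖h z‖ * ‖h z'‖) := by
          have hx1 : 0 ≤ K z * (|e z| / (η * ‖δ z (u 0 z)‖)) :=
            mul_nonneg (hK0 z) (div_nonneg (abs_nonneg _) (mul_pos hη0 hd0).le)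
          refine mul_le_mul_of_nonneg_right ?_ (by positivity)
          exact add_le_add (mul_le_mul hb1 hs1' (norm_nonneg _) hx1)
            (mul_le_mul hs0 hb1' (norm_nonneg _) (hS0 z))
      _ = (1/η) * (A z * (S z' * ‖h z'‖) + (S z * ‖h z‖) * A z') := by
          simp only [hAdef]
          field_simp
  -- measurability & integrability of A
  have hfsq : ∀ z, (K z * ‖h z‖ / ‖δ z (u 0 z)‖) ^ 2 =
      K z ^ 2 * ‖h z‖ ^ 2 / ‖δ z (u 0 z)‖ ^ 2 := fun z => by ring
  have hf_eq : ∀ z, K z * ‖h z‖ / ‖δ z (u 0 z)‖ =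
      Real.sqrt (K z ^ 2 * ‖h z‖ ^ 2 / ‖δ z (u 0 z)‖ ^ 2) := by
    intro z
    rw [← hfsq, Real.sqrt_sq (div_nonneg (mul_nonneg (hK0 z) (norm_nonneg _)) (norm_nonneg _))]
  have haesm_f : ∀ (ρ : Measure Z),
      Integrable (fun z => K z ^ 2 * ‖h z‖ ^ 2 / ‖δ z (u 0 z)‖ ^ 2) ρ →
      AEStronglyMeasurable (fun z => K z * ‖h z‖ / ‖δ z (u 0 z)‖) ρ := by
    intro ρ hint
    have h1 : AEStronglyMeasurable
        (fun z => Real.sqrt (K z ^ 2 * ‖h z‖ ^ 2 / ‖δ z (u 0 z)‖ ^ 2)) ρ :=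
      Real.continuous_sqrt.comp_aestronglyMeasurable hint.1
    exact h1.congr (ae_of_all _ fun z => (hf_eq z).symm)
  have haesm_e : ∀ (ρ : Measure Z), Integrable (fun z => e z ^ 2) ρ →
      AEStronglyMeasurable (fun z => |e z|) ρ := by
    intro ρ hint
    have h1 : AEStronglyMeasurable (fun z => Real.sqrt (e z ^ 2)) ρ :=
      Real.continuous_sqrt.comp_aestronglyMeasurable hint.1
    exact h1.congr (ae_of_all _ fun z => Real.sqrt_sq_eq_abs (e z))
  have hAint : ∀ (ρ : Measure Z),
      Integrable (fun z => K z ^ 2 * ‖h z‖ ^ 2 / ‖δ z (u 0 z)‖ ^ 2) ρ →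
      Integrable (fun z => e z ^ 2) ρ →
      Integrable (fun z => K z * ‖h z‖ * ‖Matrix.toEuclideanLin E (h z)‖) ρ →
      (∀ᵐ z ∂ρ, δ z (u 0 z) ≠ 0 ∧
        η * (‖δ z (u 0 z)‖ * ‖Matrix.toEuclideanLin E (h z)‖) ≤
          |⟪δ z (u 0 z), Matrix.toEuclideanLin E (h z)⟫|) →
      Integrable A ρ := by
    intro ρ hC hE hKh hA3
    refine hKh.mono' ((haesm_f ρ hC).mul (haesm_e ρ hE)) ?_
    filter_upwards [hA3] with z hz
    have hd0 : 0 < ‖δ z (u 0 z)‖ := norm_pos_iff.2 hz.1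
    have hle : |e z| ≤ ‖δ z (u 0 z)‖ * ‖Matrix.toEuclideanLin E (h z)‖ := (hA3cons z hz).2
    rw [Real.norm_eq_abs, abs_of_nonneg (hA0 z)]
    calc A z = (K z * ‖h z‖) * (|e z| / ‖δ z (u 0 z)‖) := by rw [hAdef]; ring
      _ ≤ (K z * ‖h z‖) * ‖Matrix.toEuclideanLin E (h z)‖ := by
          refine mul_le_mul_of_nonneg_left ?_ (mul_nonneg (hK0 z) (norm_nonneg _))
          rw [div_le_iff₀ hd0]
          calc |e z| ≤ ‖δ z (u 0 z)‖ * ‖Matrix.toEuclideanLin E (h z)‖ := hle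
            _ = ‖Matrix.toEuclideanLin E (h z)‖ * ‖δ z (u 0 z)‖ := by ring
      _ = K z * ‖h z‖ * ‖Matrix.toEuclideanLin E (h z)‖ := by ring
  have hAintμ : Integrable A μ := hAint μ hCμint heμint hKhint hA3μ
  have hAintν : Integrable A ν := hAint ν hCνint heνint hKhint' hA3ν
  -- Cauchy–Schwarz
  have hcs : ∀ (ρ : Measure Z),
      Integrable (fun z => K z ^ 2 * ‖h z‖ ^ 2 / ‖δ z (u 0 z)‖ ^ 2) ρ →
      Integrable (fun z => e z ^ 2) ρ →
      ∫ z, A z ∂ρ ≤ Real.sqrt (∫ z, K z ^ 2 * ‖h z‖ ^ 2 / ‖δ z (u 0 z)‖ ^ 2 ∂ρ) *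
        Real.sqrt (∫ z, e z ^ 2 ∂ρ) := by
    intro ρ hC hE
    have hf2 : Integrable (fun z => (K z * ‖h z‖ / ‖δ z (u 0 z)‖) ^ 2) ρ :=
      hC.congr (ae_of_all _ fun z => (hfsq z).symm)
    have hg2 : Integrable (fun z => |e z| ^ 2) ρ :=
      hE.congr (ae_of_all _ fun z => (sq_abs (e z)).symm)
    have h1 := cs_int (haesm_f ρ hC) (haesm_e ρ hE)
      (fun z => div_nonneg (mul_nonneg (hK0 z) (norm_nonneg _)) (norm_nonneg _))
      (fun z => abs_nonneg _) hf2 hg2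
    calc ∫ z, A z ∂ρ = ∫ z, (K z * ‖h z‖ / ‖δ z (u 0 z)‖) * |e z| ∂ρ := rfl
      _ ≤ Real.sqrt (∫ z, (K z * ‖h z‖ / ‖δ z (u 0 z)‖) ^ 2 ∂ρ) *
          Real.sqrt (∫ z, |e z| ^ 2 ∂ρ) := h1
      _ = Real.sqrt (∫ z, K z ^ 2 * ‖h z‖ ^ 2 / ‖δ z (u 0 z)‖ ^ 2 ∂ρ) *
          Real.sqrt (∫ z, e z ^ 2 ∂ρ) := by
          congr 1
          · congr 1; exact integral_congr_ae (ae_of_all _ fun z => hfsq z)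
          · congr 1; exact integral_congr_ae (ae_of_all _ fun z => sq_abs (e z))
  -- inner integral bound
  have hinner : ∀ᵐ z' ∂ν, ∫ z, |IWhat z z' - IW z z'| ∂μ ≤
      (1/η) * ((∫ z, A z ∂μ) * (S z' * ‖h z'‖) + Mμ * A z') := by
    filter_upwards [hA1ν, hA3ν, hFubini.prod_right_ae] with z' h1' h3' hslice
    have hstep : ∫ z, |IWhat z z' - IW z z'| ∂μ ≤
        ∫ z, (1/η) * (A z * (S z' * ‖h z'‖) + (S z * ‖h z‖) * A z') ∂μ := by
      refine integral_mono_ae hslice.abs ?_ ?_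
      · exact ((hAintμ.mul_const _).add (hMμint'.mul_const _)).const_mul _
      · filter_upwards [hA1μ, hA3μ] with z h1 h3
        exact hpt z z' h1 h3 h1' h3'
    refine hstep.trans_eq ?_
    rw [integral_const_mul, integral_add (hAintμ.mul_const _) (hMμint'.mul_const _),
      integral_mul_const, integral_mul_const, ← hMμ']
  -- outer integral bound
  have hLint : Integrable (fun z' => ∫ z, |IWhat z z' - IW z z'| ∂μ) ν := by
    have h1 := hFubini.integral_norm_prod_left
    simpa [Real.norm_eq_abs] using h1
  have houter : (∫ z', ∫ z, |IWhat z z' - IW z z'| ∂μ ∂ν) ≤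
      (1/η) * ((∫ z, A z ∂μ) * Mν + Mμ * (∫ z, A z ∂ν)) := by
    have h2 : (∫ z', ∫ z, |IWhat z z' - IW z z'| ∂μ ∂ν) ≤
        ∫ z', (1/η) * ((∫ z, A z ∂μ) * (S z' * ‖h z'‖) + Mμ * A z') ∂ν := by
      refine integral_mono_ae hLint ?_ hinner
      exact ((hMνint'.const_mul _).add (hAintν.const_mul _)).const_mul _
    refine h2.trans_eq ?_
    rw [integral_const_mul, integral_add (hMνint'.const_mul _) (hAintν.const_mul _),
      integral_const_mul, integral_const_mul, ← hMν']
  -- combine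
  have hMν0 : 0 ≤ Mν := by
    rw [hMν']; exact integral_nonneg fun z => mul_nonneg (hS0 z) (norm_nonneg _)
  have hMμ0 : 0 ≤ Mμ := by
    rw [hMμ']; exact integral_nonneg fun z => mul_nonneg (hS0 z) (norm_nonneg _)
  have hCν0 : 0 ≤ Cν := hCν ▸ Real.sqrt_nonneg _
  have hcsμ : ∫ z, A z ∂μ ≤ Cμ * Real.sqrt (∫ z, e z ^ 2 ∂μ) := by
    rw [hCμ]; exact hcs μ hCμint heμint
  have hcsν : ∫ z, A z ∂ν ≤ Cν * (Real.sqrt κ * Real.sqrt (∫ z, e z ^ 2 ∂μ)) := by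
    have h0 : ∫ z, A z ∂ν ≤ Cν * Real.sqrt (∫ z, e z ^ 2 ∂ν) := by
      rw [hCν]; exact hcs ν hCνint heνint
    refine h0.trans ?_
    have h1 : Real.sqrt (∫ z, e z ^ 2 ∂ν) ≤ Real.sqrt κ * Real.sqrt (∫ z, e z ^ 2 ∂μ) := by
      rw [← Real.sqrt_mul hκ0]
      exact Real.sqrt_le_sqrt hA4
    exact mul_le_mul_of_nonneg_left h1 hCν0
  calc (∫ z', ∫ z, |IWhat z z' - IW z z'| ∂μ ∂ν)
      ≤ (1/η) * ((∫ z, A z ∂μ) * Mν + Mμ * (∫ z, A z ∂ν)) := houter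
    _ ≤ (1/η) * ((Cμ * Real.sqrt (∫ z, e z ^ 2 ∂μ)) * Mν +
          Mμ * (Cν * (Real.sqrt κ * Real.sqrt (∫ z, e z ^ 2 ∂μ)))) := by
        have h1η : (0:ℝ) ≤ 1/η := by positivity
        gcongr
    _ = ((Mν / η) * Cμ + Real.sqrt κ * ((Mμ / η) * Cν)) * Real.sqrt (∫ z, e z ^ 2 ∂μ) := by
        ring
end

section
/- (Intermediate TracIn bound.) Assume: for μ-a.e. z and ν-a.e. z', the map δ(z,·) is differentiable on a neighborhood of the segment {u_τ(z) : τ ∈ [0,1]} with a measurable K(z) ≥ 0 bounding the operator norm of its Jacobian on that segment; M_μ := ∫ (sup_{τ∈[0,1]} ‖δ_τ(z)‖)·‖h(z)‖ dμ(z) and M_ν := ∫ (sup_{τ∈[0,1]} ‖δ_τ(z')‖)·‖h(z')‖ dν(z') are finite; and all displayed maps are measurable and integrable so that Fubini applies. Then ∫∫ |I_Ŵ(z,z') − I_W(z,z')| dμ(z) dν(z') ≤ M_ν · ∫ K(z) ‖h(z)‖ ‖E h(z)‖ dμ(z) + M_μ · ∫ K(z') ‖h(z')‖ ‖E h(z')‖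 dν(z'). -/
open Matrix MeasureTheory
open scoped RealInnerProductSpace

lemma tracin_seg_aux {m : ℕ} (f : EuclideanSpace ℝ (Fin m) → EuclideanSpace ℝ (Fin m))
    (a v : EuclideanSpace ℝ (Fin m)) (C : ℝ) (hC : 0 ≤ C)
    (hd : ∀ τ ∈ Set.Icc (0:ℝ) 1,
      ∃ J : EuclideanSpace ℝ (Fin m) →L[ℝ] EuclideanSpace ℝ (Fin m),
        HasFDerivAt f J (a + τ • v) ∧ ‖J‖ ≤ C) :
    ‖f (a + (1:ℝ) • v) - f (a + (0:ℝ) • v)‖ ≤ C * ‖v‖ ∧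
      ∀ τ ∈ Set.Icc (0:ℝ) 1, ‖f (a + τ • v)‖ ≤ ‖f (a + (0:ℝ) • v)‖ + C * ‖v‖ := by
  classical
  set g : ℝ → EuclideanSpace ℝ (Fin m) := fun τ => f (a + τ • v) with hg
  set J' : ℝ → EuclideanSpace ℝ (Fin m) →L[ℝ] EuclideanSpace ℝ (Fin m) :=
    fun τ => if hτ : τ ∈ Set.Icc (0:ℝ) 1 then (hd τ hτ).choose else 0 with hJ'
  have hderiv : ∀ τ ∈ Set.Icc (0:ℝ) 1,
      HasDerivWithinAt g (J' τ v) (Set.Icc (0:ℝ) 1) τ := by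
    intro τ hτ
    have hline : HasDerivAt (fun s : ℝ => a + s • v) v τ := by
      simpa using ((hasDerivAt_id τ).smul_const v).const_add a
    have hJ := (hd τ hτ).choose_spec.1
    have := hJ.comp_hasDerivAt τ hline
    simp only [hJ', dif_pos hτ]
    exact this.hasDerivWithinAt
  have hbound : ∀ τ ∈ Set.Ico (0:ℝ) 1, ‖J' τ v‖ ≤ C * ‖v‖ := by
    intro τ hτ
    have hτ' : τ ∈ Set.Icc (0:ℝ) 1 := Set.Ico_subset_Icc_self hτ
    calc ‖J' τ v‖ ≤ ‖J' τ‖ * ‖v‖ := (J' τ).le_opNorm v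
      _ ≤ C * ‖v‖ := by
          apply mul_le_mul_of_nonneg_right _ (norm_nonneg v)
          simp only [hJ', dif_pos hτ']
          exact (hd τ hτ').choose_spec.2
  have hmvt := norm_image_sub_le_of_norm_deriv_le_segment' hderiv hbound
  constructor
  · have := hmvt 1 (by norm_num)
    simpa [hg] using this
  · intro τ hτ
    have h1 := hmvt τ hτ
    have h2 : ‖g τ‖ ≤ ‖g 0‖ + C * ‖v‖ * (τ - 0) := by
      calc ‖g τ‖ ≤ ‖g 0‖ + ‖g τ - g 0‖ := by
            simpa using norm_add_le (g 0) (g τ - g 0)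
        _ ≤ ‖g 0‖ + C * ‖v‖ * (τ - 0) := by linarith
    have h3 : C * ‖v‖ * (τ - 0) ≤ C * ‖v‖ := by
      have : C * ‖v‖ * (τ - 0) ≤ C * ‖v‖ * 1 :=
        mul_le_mul_of_nonneg_left (by linarith [hτ.2]) (mul_nonneg hC (norm_nonneg v))
      linarith
    have h4 : ‖g τ‖ ≤ ‖g 0‖ + C * ‖v‖ := by linarith
    simpa [hg] using h4

/-- **Intermediate TracIn bound.**
With `Ŵ = W + E`, `u_τ(z) = (W + τE) h(z)`, `δ_τ(z) = δ(z, u_τ(z))`,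
`I_W(z,z') = ⟨δ₀(z), δ₀(z')⟩⟨h(z), h(z')⟩` and `I_Ŵ(z,z') = ⟨δ₁(z), δ₁(z')⟩⟨h(z), h(z')⟩`,
assuming backward smoothness with Jacobian bound `K` along the segment and finiteness of the
moments `M_μ`, `M_ν`, one has
`∫∫ |I_Ŵ − I_W| dμ dν ≤ M_ν ∫ K(z)‖h(z)‖‖E h(z)‖ dμ(z) + M_μ ∫ K(z')‖h(z')‖‖E h(z')‖ dν(z')`. -/
theorem tracin_intermediate_bound {m n : ℕ} {Z : Type*} [MeasurableSpace Z]
    (μ ν : Measure Z) [IsProbabilityMeasure μ] [IsProbabilityMeasure ν]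
    (W E : Matrix (Fin m) (Fin n) ℝ)
    (h : Z → EuclideanSpace ℝ (Fin n))
    (δ : Z → EuclideanSpace ℝ (Fin m) → EuclideanSpace ℝ (Fin m))
    (K : Z → ℝ)
    -- abbreviations
    (u : ℝ → Z → EuclideanSpace ℝ (Fin m))
    (hu : ∀ (τ : ℝ) (z : Z), u τ z = Matrix.toEuclideanLin (W + τ • E) (h z))
    (IW IWhat : Z → Z → ℝ)
    (hIW : ∀ z z', IW z z' = ⟪δ z (u 0 z), δ z' (u 0 z')⟫ * ⟪h z, h z'⟫)
    (hIWhat : ∀ z z', IWhat z z' = ⟪δ z (u 1 z), δ z' (u 1 z')⟫ * ⟪h z, h z'⟫)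
    -- measurability of the displayed maps
    (hhmeas : Measurable h) (hKmeas : Measurable K) (hK0 : ∀ z, 0 ≤ K z)
    -- backward smoothness, μ-a.e. and ν-a.e.
    (hA1μ : ∀ᵐ z ∂μ, ∀ τ ∈ Set.Icc (0:ℝ) 1,
      ∃ J : EuclideanSpace ℝ (Fin m) →L[ℝ] EuclideanSpace ℝ (Fin m),
        HasFDerivAt (δ z) J (u τ z) ∧ ‖J‖ ≤ K z)
    (hA1ν : ∀ᵐ z ∂ν, ∀ τ ∈ Set.Icc (0:ℝ) 1,
      ∃ J : EuclideanSpace ℝ (Fin m) →L[ℝ] EuclideanSpace ℝ (Fin m),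
        HasFDerivAt (δ z) J (u τ z) ∧ ‖J‖ ≤ K z)
    -- finite moments
    (Mμ Mν : ℝ)
    (hMμ : Mμ = ∫ z, (⨆ τ : Set.Icc (0:ℝ) 1, ‖δ z (u τ z)‖) * ‖h z‖ ∂μ)
    (hMν : Mν = ∫ z, (⨆ τ : Set.Icc (0:ℝ) 1, ‖δ z (u τ z)‖) * ‖h z‖ ∂ν)
    (hMμint : Integrable (fun z => (⨆ τ : Set.Icc (0:ℝ) 1, ‖δ z (u τ z)‖) * ‖h z‖) μ)
    (hMνint : Integrable (fun z => (⨆ τ : Set.Icc (0:ℝ) 1, ‖δ z (u τ z)‖) * ‖h z‖) ν)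
    -- integrability so that Fubini applies
    (hFubini : Integrable (fun p : Z × Z => IWhat p.2 p.1 - IW p.2 p.1) (ν.prod μ))
    (hKhint : Integrable (fun z => K z * ‖h z‖ * ‖Matrix.toEuclideanLin E (h z)‖) μ)
    (hKhint' : Integrable (fun z => K z * ‖h z‖ * ‖Matrix.toEuclideanLin E (h z)‖) ν) :
    (∫ z', ∫ z, |IWhat z z' - IW z z'| ∂μ ∂ν)
      ≤ Mν * (∫ z, K z * ‖h z‖ * ‖Matrix.toEuclideanLin E (h z)‖ ∂μ)
        + Mμ * (∫ z, K z * ‖h z‖ * ‖Matrix.toEuclideanLin E (h z)‖ ∂ν) := by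
  classical
  -- notations
  set S : Z → ℝ := fun z => ⨆ τ : Set.Icc (0:ℝ) 1, ‖δ z (u τ z)‖ with hS
  set F : Z → ℝ := fun z => K z * ‖h z‖ * ‖Matrix.toEuclideanLin E (h z)‖ with hF
  -- the segment decomposition of u
  have huseg : ∀ (τ : ℝ) (z : Z),
      u τ z = Matrix.toEuclideanLin W (h z) + τ • Matrix.toEuclideanLin E (h z) := by
    intro τ z
    rw [hu]
    simp only [_root_.map_add, _root_.map_smul, LinearMap.add_apply, LinearMap.smul_apply]
  -- pointwise facts for a good point z
  have hfacts : ∀ z : Z,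
      (∀ τ ∈ Set.Icc (0:ℝ) 1,
        ∃ J : EuclideanSpace ℝ (Fin m) →L[ℝ] EuclideanSpace ℝ (Fin m),
          HasFDerivAt (δ z) J (u τ z) ∧ ‖J‖ ≤ K z) →
      ‖δ z (u 1 z) - δ z (u 0 z)‖ ≤ K z * ‖Matrix.toEuclideanLin E (h z)‖ ∧
        ‖δ z (u 0 z)‖ ≤ S z ∧ ‖δ z (u 1 z)‖ ≤ S z ∧ 0 ≤ S z := by
    intro z hz
    set a := Matrix.toEuclideanLin W (h z)
    set v := Matrix.toEuclideanLin E (h z)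
    have hz' : ∀ τ ∈ Set.Icc (0:ℝ) 1,
        ∃ J : EuclideanSpace ℝ (Fin m) →L[ℝ] EuclideanSpace ℝ (Fin m),
          HasFDerivAt (δ z) J (a + τ • v) ∧ ‖J‖ ≤ K z := by
      intro τ hτ
      have := hz τ hτ
      rwa [huseg τ z] at this
    obtain ⟨hmvt, hsupbd⟩ := tracin_seg_aux (δ z) a v (K z) (hK0 z) hz'
    have hu0 : u 0 z = a + (0:ℝ) • v := huseg 0 z
    have hu1 : u 1 z = a + (1:ℝ) • v := huseg 1 z
    have hbdd : BddAbove (Set.range fun τ : Set.Icc (0:ℝ) 1 => ‖δ z (u τ z)‖) := by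
      refine ⟨‖δ z (a + (0:ℝ) • v)‖ + K z * ‖v‖, ?_⟩
      rintro x ⟨τ, rfl⟩
      show ‖δ z (u (τ : ℝ) z)‖ ≤ _
      rw [huseg (τ : ℝ) z]
      exact hsupbd τ τ.2
    have h0le : ‖δ z (u 0 z)‖ ≤ S z := by
      have := le_ciSup hbdd (⟨0, by norm_num⟩ : Set.Icc (0:ℝ) 1)
      simpa [hS] using this
    have h1le : ‖δ z (u 1 z)‖ ≤ S z := by
      have := le_ciSup hbdd (⟨1, by norm_num⟩ : Set.Icc (0:ℝ) 1)
      simpa [hS] using this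
    refine ⟨?_, h0le, h1le, le_trans (norm_nonneg _) h0le⟩
    rw [hu0, hu1]
    exact hmvt
  -- pointwise bound on the difference
  have hpt : ∀ z z' : Z,
      (‖δ z (u 1 z) - δ z (u 0 z)‖ ≤ K z * ‖Matrix.toEuclideanLin E (h z)‖ ∧
        ‖δ z (u 0 z)‖ ≤ S z ∧ ‖δ z (u 1 z)‖ ≤ S z ∧ 0 ≤ S z) →
      (‖δ z' (u 1 z') - δ z' (u 0 z')‖ ≤ K z' * ‖Matrix.toEuclideanLin E (h z')‖ ∧
        ‖δ z' (u 0 z')‖ ≤ S z' ∧ ‖δ z' (u 1 z')‖ ≤ S z' ∧ 0 ≤ S z') →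
      |IWhat z z' - IW z z'| ≤ S z' * ‖h z'‖ * F z + S z * ‖h z‖ * F z' := by
    intro z z' ⟨hd1, h01, h11, hS1⟩ ⟨hd2, h02, h12, hS2⟩
    rw [hIW, hIWhat]
    set d0 := δ z (u 0 z); set d1 := δ z (u 1 z)
    set e0 := δ z' (u 0 z'); set e1 := δ z' (u 1 z')
    have hsplit : ⟪d1, e1⟫ * ⟪h z, h z'⟫ - ⟪d0, e0⟫ * ⟪h z, h z'⟫
        = (⟪d1 - d0, e1⟫ + ⟪d0, e1 - e0⟫) * ⟪h z, h z'⟫ := by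
      rw [inner_sub_left, inner_sub_right]; ring
    rw [hsplit, abs_mul]
    have hinner : |⟪d1 - d0, e1⟫ + ⟪d0, e1 - e0⟫|
        ≤ K z * ‖Matrix.toEuclideanLin E (h z)‖ * S z'
          + S z * (K z' * ‖Matrix.toEuclideanLin E (h z')‖) := by
      calc |⟪d1 - d0, e1⟫ + ⟪d0, e1 - e0⟫|
          ≤ |⟪d1 - d0, e1⟫| + |⟪d0, e1 - e0⟫| := abs_add_le _ _
        _ ≤ ‖d1 - d0‖ * ‖e1‖ + ‖d0‖ * ‖e1 - e0‖ :=
            add_le_add (abs_real_inner_le_norm _ _) (abs_real_inner_le_norm _ _)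
        _ ≤ K z * ‖Matrix.toEuclideanLin E (h z)‖ * S z'
              + S z * (K z' * ‖Matrix.toEuclideanLin E (h z')‖) :=
            add_le_add
              (mul_le_mul hd1 h12 (norm_nonneg _)
                (mul_nonneg (hK0 z) (norm_nonneg _)))
              (mul_le_mul h01 hd2 (norm_nonneg _) hS1)
    have hhh : |⟪h z, h z'⟫| ≤ ‖h z‖ * ‖h z'‖ := abs_real_inner_le_norm _ _
    calc |⟪d1 - d0, e1⟫ + ⟪d0, e1 - e0⟫| * |⟪h z, h z'⟫|
        ≤ (K z * ‖Matrix.toEuclideanLin E (h z)‖ * S z'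
            + S z * (K z' * ‖Matrix.toEuclideanLin E (h z')‖)) * (‖h z‖ * ‖h z'‖) := by
          apply mul_le_mul hinner hhh (abs_nonneg _)
          have h1 : 0 ≤ K z * ‖Matrix.toEuclideanLin E (h z)‖ :=
            mul_nonneg (hK0 z) (norm_nonneg _)
          have h2 : 0 ≤ K z' * ‖Matrix.toEuclideanLin E (h z')‖ :=
            mul_nonneg (hK0 z') (norm_nonneg _)
          exact add_nonneg (mul_nonneg h1 hS2) (mul_nonneg hS1 h2)
      _ = S z' * ‖h z'‖ * F z + S z * ‖h z‖ * F z' := by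
          simp only [hF]; ring
  -- inner integral bound, for a.e. z'
  have hinnerint : ∀ᵐ z' ∂ν, Integrable (fun z => IWhat z z' - IW z z') μ :=
    hFubini.prod_right_ae
  have hinner_bound : ∀ᵐ z' ∂ν,
      (∫ z, |IWhat z z' - IW z z'| ∂μ)
        ≤ S z' * ‖h z'‖ * (∫ z, F z ∂μ) + Mμ * F z' := by
    filter_upwards [hinnerint, hA1ν] with z' hint hz'
    have hfz' := hfacts z' hz'
    have step1 : (∫ z, |IWhat z z' - IW z z'| ∂μ)
        ≤ ∫ z, (S z' * ‖h z'‖ * F z + S z * ‖h z‖ * F z') ∂μ := by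
      apply integral_mono_ae hint.abs
      · exact (hKhint.const_mul (S z' * ‖h z'‖)).add (hMμint.mul_const (F z'))
      · filter_upwards [hA1μ] with z hz
        exact hpt z z' (hfacts z hz) hfz'
    have step2 : (∫ z, (S z' * ‖h z'‖ * F z + S z * ‖h z‖ * F z') ∂μ)
        = S z' * ‖h z'‖ * (∫ z, F z ∂μ) + Mμ * F z' := by
      rw [integral_add (hKhint.const_mul (S z' * ‖h z'‖)) (hMμint.mul_const (F z')),
        integral_const_mul, integral_mul_const, hMμ]
    rw [step2] at step1
    exact step1
  -- outer integration
  have hLHSint : Integrable (fun z' => ∫ z, |IWhat z z' - IW z z'| ∂μ) ν := by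
    have := hFubini.integral_norm_prod_left
    simpa [Real.norm_eq_abs] using this
  have hRHSint : Integrable (fun z' => S z' * ‖h z'‖ * (∫ z, F z ∂μ) + Mμ * F z') ν :=
    (hMνint.mul_const _).add (hKhint'.const_mul Mμ)
  have houter := integral_mono_ae hLHSint hRHSint hinner_bound
  have hcalc : (∫ z', (S z' * ‖h z'‖ * (∫ z, F z ∂μ) + Mμ * F z') ∂ν)
      = Mν * (∫ z, F z ∂μ) + Mμ * (∫ z, F z ∂ν) := by
    rw [integral_add (hMνint.mul_const _) (hKhint'.const_mul Mμ),
      integral_mul_const, integral_const_mul, hMν]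
  rw [hcalc] at houter
  exact houter
end
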